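/- Let A ∈ ℝ^{r'×N} and B ∈ ℝ^{N×r} be full-rank matrices with r ≤ r' ≤ N, and suppose AA^T is invertible. Let P_{A^T}(B) = A^T (A A^T)^{-1} A B denote the orthogonal projection of the columns of B onto the row space of A, and assume σ_min(P_{A^T}(B)) > 0. Then σ_min(AB) ≥ σ_min(A) · σ_min(P_{A^T}(B)). -/

import Mathlib

open scoped BigOperators
open MeasureTheory ProbabilityTheory Matrix

noncomputable def enorm2 {n : ℕ} (v : Fin n → ℝ) : ℝ :=
  ‖(WithLp.equiv 2 (Fin n → ℝ)).symm v‖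

noncomputable def sMax {m n : ℕ} (A : Matrix (Fin m) (Fin n) ℝ) : ℝ :=
  ⨆ x : {x : Fin n → ℝ // enorm2 x = 1}, enorm2 (A.mulVec x.1)

noncomputable def sMin {m n : ℕ} (A : Matrix (Fin m) (Fin n) ℝ) : ℝ :=
  ⨅ x : {x : Fin n → ℝ // enorm2 x = 1}, enorm2 (A.mulVec x.1)

/-! Write `P = Aᵀ C` with `C = (AAᵀ)⁻¹ A B`, so that `A P = A B`. For a vector
`u = Aᵀ z`, Cauchy–Schwarz gives `‖u‖² = ⟪z, A u⟫ ≤ ‖z‖ ‖A u‖`, while `σ_min(Aᵀ) ‖z‖ ≤ ‖u‖`;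
hence `σ_min(Aᵀ) ‖u‖ ≤ ‖A u‖`. Applied to `u = P x` with `‖x‖ = 1` this gives
`σ_min(Aᵀ) σ_min(P) ≤ ‖A B x‖`. -/

section enorm2

variable {n : ℕ}

lemma enorm2_nonneg (v : Fin n → ℝ) : 0 ≤ enorm2 v := norm_nonneg _

@[simp]
lemma enorm2_zero : enorm2 (0 : Fin n → ℝ) = 0 := by
  simp [enorm2]

lemma enorm2_smul (c : ℝ) (v : Fin n → ℝ) : enorm2 (c • v) = |c| * enorm2 v := by
  simp [enorm2, norm_smul]

lemma enorm2_pos {v : Fin n → ℝ} (hv : v ≠ 0) : 0 < enorm2 v := by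
  simpa [enorm2] using hv

lemma inner_toLp_eq_dotProduct (v w : Fin n → ℝ) :
    inner ℝ (WithLp.toLp 2 v) (WithLp.toLp 2 w) = v ⬝ᵥ w := by
  simp [PiLp.inner_apply, dotProduct, mul_comm]

lemma enorm2_sq (v : Fin n → ℝ) : enorm2 v ^ 2 = v ⬝ᵥ v := by
  rw [← inner_toLp_eq_dotProduct, real_inner_self_eq_norm_sq]
  rfl

lemma dotProduct_le_enorm2_mul (v w : Fin n → ℝ) : v ⬝ᵥ w ≤ enorm2 v * enorm2 w := by
  rw [← inner_toLp_eq_dotProduct]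
  exact real_inner_le_norm _ _

end enorm2

section sMin

variable {m n : ℕ}

lemma sMin_nonneg (M : Matrix (Fin m) (Fin n) ℝ) : 0 ≤ sMin M :=
  Real.iInf_nonneg fun _ => enorm2_nonneg _

lemma sMin_le_enorm2_mulVec (M : Matrix (Fin m) (Fin n) ℝ) {x : Fin n → ℝ} (hx : enorm2 x = 1) :
    sMin M ≤ enorm2 (M *ᵥ x) :=
  ciInf_le (f := fun y : {x : Fin n → ℝ // enorm2 x = 1} => enorm2 (M *ᵥ y.1))
    ⟨0, Set.forall_mem_range.2 fun _ => enorm2_nonneg _⟩ ⟨x, hx⟩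

lemma sMin_mul_enorm2_le (M : Matrix (Fin m) (Fin n) ℝ) (z : Fin n → ℝ) :
    sMin M * enorm2 z ≤ enorm2 (M *ᵥ z) := by
  rcases eq_or_ne z 0 with rfl | hz
  · simp
  have hpos := enorm2_pos hz
  have hunit : enorm2 ((enorm2 z)⁻¹ • z) = 1 := by
    rw [enorm2_smul, abs_of_pos (inv_pos.2 hpos), inv_mul_cancel₀ hpos.ne']
  have h := sMin_le_enorm2_mulVec M hunit
  rw [mulVec_smul, enorm2_smul, abs_of_pos (inv_pos.2 hpos)] at h
  calc sMin M * enorm2 z ≤ (enorm2 z)⁻¹ * enorm2 (M *ᵥ z) * enorm2 z := by gcongr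
    _ = enorm2 (M *ᵥ z) := by field_simp

lemma sMin_transpose_mul_enorm2_le (A : Matrix (Fin m) (Fin n) ℝ) (z : Fin m → ℝ) :
    sMin Aᵀ * enorm2 (Aᵀ *ᵥ z) ≤ enorm2 (A *ᵥ (Aᵀ *ᵥ z)) := by
  set u := Aᵀ *ᵥ z
  rcases eq_or_ne u 0 with hu | hu
  · simp [hu]
  have hupos := enorm2_pos hu
  have hlower : sMin Aᵀ * enorm2 z ≤ enorm2 u := sMin_mul_enorm2_le Aᵀ z
  have hCS : enorm2 u ^ 2 ≤ enorm2 z * enorm2 (A *ᵥ u) := by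
    calc enorm2 u ^ 2 = z ⬝ᵥ (A *ᵥ u) := by
          rw [enorm2_sq, dotProduct_mulVec, vecMul_transpose, dotProduct_comm]
      _ ≤ enorm2 z * enorm2 (A *ᵥ u) := dotProduct_le_enorm2_mul _ _
  refine le_of_mul_le_mul_right ?_ hupos
  calc sMin Aᵀ * enorm2 u * enorm2 u = sMin Aᵀ * enorm2 u ^ 2 := by ring
    _ ≤ sMin Aᵀ * (enorm2 z * enorm2 (A *ᵥ u)) := by gcongr; exact sMin_nonneg _
    _ = sMin Aᵀ * enorm2 z * enorm2 (A *ᵥ u) := by ring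
    _ ≤ enorm2 u * enorm2 (A *ᵥ u) := by gcongr; exact enorm2_nonneg _
    _ = enorm2 (A *ᵥ u) * enorm2 u := by ring

lemma sMin_transpose_mul_sMin_le_sMin_mul {k : ℕ} (A : Matrix (Fin m) (Fin n) ℝ)
    (C : Matrix (Fin m) (Fin k) ℝ) :
    sMin Aᵀ * sMin (Aᵀ * C) ≤ sMin (A * (Aᵀ * C)) := by
  rcases isEmpty_or_nonempty {x : Fin k → ℝ // enorm2 x = 1} with _ | _
  · -- `k = 0`: the unit sphere is empty and every `sMin` is the junk value `⨅ ∅ = 0`.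
    simp [sMin, Real.iInf_of_isEmpty]
  refine le_ciInf fun ⟨x, hx⟩ => ?_
  calc sMin Aᵀ * sMin (Aᵀ * C) ≤ sMin Aᵀ * enorm2 ((Aᵀ * C) *ᵥ x) := by
        gcongr
        · exact sMin_nonneg _
        · exact sMin_le_enorm2_mulVec _ hx
    _ ≤ enorm2 (A *ᵥ ((Aᵀ * C) *ᵥ x)) := by
        rw [← mulVec_mulVec]
        exact sMin_transpose_mul_enorm2_le A _
    _ = enorm2 ((A * (Aᵀ * C)) *ᵥ x) := by rw [mulVec_mulVec]

end sMin

theorem stmt_2_general {r r' N : ℕ}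
    (A : Matrix (Fin r') (Fin N) ℝ) (B : Matrix (Fin N) (Fin r) ℝ)
    (hInv : IsUnit (A * Aᵀ).det) :
    sMin Aᵀ * sMin (Aᵀ * (A * Aᵀ)⁻¹ * A * B) ≤ sMin (A * B) := by
  have hfactor : Aᵀ * (A * Aᵀ)⁻¹ * A * B = Aᵀ * ((A * Aᵀ)⁻¹ * A * B) := by
    simp only [Matrix.mul_assoc]
  have hproj : A * (Aᵀ * ((A * Aᵀ)⁻¹ * A * B)) = A * B := by
    simp only [← Matrix.mul_assoc, mul_nonsing_inv _ hInv, Matrix.one_mul]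
  rw [hfactor, ← hproj]
  exact sMin_transpose_mul_sMin_le_sMin_mul A _

theorem stmt_2 {r r' N : ℕ} (hr : r ≤ r') (hr' : r' ≤ N)
    (A : Matrix (Fin r') (Fin N) ℝ) (B : Matrix (Fin N) (Fin r) ℝ)
    (hArank : A.rank = r') (hBrank : B.rank = r)
    (hInv : IsUnit (A * Aᵀ).det)
    (hP : 0 < sMin (Aᵀ * (A * Aᵀ)⁻¹ * A * B)) :
    sMin Aᵀ * sMin (Aᵀ * (A * Aᵀ)⁻¹ * A * B) ≤ sMin (A * B) :=
  stmt_2_general A B hInv
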